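/- Let N ≥ 2 be an integer, x : ℤ/Nℤ → ℂ a function, and let 0 ≤ m,k ≤ N−1 be row and column indices; put d = gcd(k,N) (so d = N when k = 0) and N_d = N/d. If d does not divide m, then the (m,k)-entry of the matrix F_N·X_N is 0. If m = du and k = dv (so that gcd(v, N_d) = 1), then the (m,k)-entry of F_N·X_N equals d·x̂_d(t), where t ∈ ℤ/N_dℤ is the unique residue with v·t ≡ u (mod N_d). -/

import Mathlib

/-!
Write `d = gcd(k, N)` and `N = d·N_d`. Since `N_d·k ≡ 0 (mod N)`, the factor `x(jk)` of the
`j`-th term of the entry is `N_d`-periodic in `j`, so splitting `j = q·N_d + r` factors the entry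
into the character sum `Σ_{q<d} e(mq/d)`, which is `d` or `0` according as `d ∣ m`, times
`Σ_{r<N_d} e(mr/N)·x(rk)`. When `m = du` and `k = dv`, the latter is `Σ_r e(ur/N_d)·x(d·vr)`;
as `v` is a unit mod `N_d`, substituting `s = vr` and using `ur ≡ ts (mod N_d)` turns it
into `x̂_d(t)`.
-/

/-- The Fourier matrix `F_N` with `(m,n)` entry `exp(2πi·mn/N)`, `0 ≤ m,n ≤ N−1`. -/
noncomputable def fourierMatrix (N : ℕ) : Matrix (Fin N) (Fin N) ℂ :=
  Matrix.of fun m n => Complex.exp (2 * Real.pi * Complex.I * (m : ℕ) * (n : ℕ) / N)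

/-- The semigroup matrix `X_N` of the multiplicative monoid `ℤ/Nℤ` attached to
`x : ℤ/Nℤ → ℂ`: its `(i,j)` entry is `x(ij mod N)`, `0 ≤ i,j ≤ N−1`. -/
def XMat (N : ℕ) (x : ZMod N → ℂ) : Matrix (Fin N) (Fin N) ℂ :=
  Matrix.of fun i j => x (((i : ℕ) : ZMod N) * ((j : ℕ) : ZMod N))

/-- For a divisor `d` of `N` and `t ∈ ℤ/N_dℤ` (`N_d = N/d`),
`x̂_d(t) = Σ_{r=0}^{N_d−1} x(dr mod N)·exp(2πi·tr/N_d)`. -/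
noncomputable def xhat (N d : ℕ) (x : ZMod N → ℂ) (t : ZMod (N / d)) : ℂ :=
  ∑ r ∈ Finset.range (N / d),
    x (((d * r : ℕ) : ZMod N)) *
      Complex.exp (2 * Real.pi * Complex.I * (ZMod.val t) * r / ((N / d : ℕ) : ℂ))

open Complex Finset
open scoped Real

theorem sum_range_mul_eq_sum_sum {M : Type*} [AddCommMonoid M] (f : ℕ → M) (d n : ℕ) :
    ∑ j ∈ range (d * n), f j = ∑ q ∈ range d, ∑ r ∈ range n, f (q * n + r) := by
  induction d with
  | zero => simp
  | succ d ih => rw [add_mul, one_mul, sum_range_add, ih, sum_range_succ]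

theorem ZMod.sum_range_eq_sum_val {M : Type*} [AddCommMonoid M] (n : ℕ) [NeZero n]
    (f : ℕ → M) : ∑ r ∈ range n, f r = ∑ z : ZMod n, f z.val :=
  sum_nbij' (fun r => (r : ZMod n)) ZMod.val (fun _ _ => mem_univ _)
    (fun z _ => mem_range.2 z.val_lt) (fun _ hr => ZMod.val_cast_of_lt (mem_range.1 hr))
    (fun z _ => ZMod.natCast_zmod_val z)
    (fun _ hr => by rw [ZMod.val_cast_of_lt (mem_range.1 hr)])

theorem ZMod.natCast_mul_eq_of_natCast_eq {d n N : ℕ} (h : d * n = N) {a b : ℕ}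
    (hab : (a : ZMod n) = b) : ((d * a : ℕ) : ZMod N) = ((d * b : ℕ) : ZMod N) := by
  rw [ZMod.natCast_eq_natCast_iff] at hab ⊢
  exact h ▸ hab.mul_left' d

theorem exp_two_pi_I_mul_mul_div_eq_stdAddChar {n : ℕ} [NeZero n] (a b : ℕ) :
    exp (2 * π * I * a * b / n) = ZMod.stdAddChar ((a : ZMod n) * (b : ZMod n)) := by
  rw [← Nat.cast_mul, ZMod.stdAddChar_apply, ZMod.toCircle_natCast, Nat.cast_mul,
    mul_assoc _ (a : ℂ)]

theorem sum_range_exp_two_pi_I_mul_div (d : ℕ) [NeZero d] (m : ℕ) :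
    ∑ q ∈ range d, exp (2 * π * I * m * q / d) = if d ∣ m then (d : ℂ) else 0 := by
  simp_rw [ZMod.sum_range_eq_sum_val d, exp_two_pi_I_mul_mul_div_eq_stdAddChar,
    ZMod.natCast_val, ZMod.cast_id', id, mul_comm (m : ZMod d),
    AddChar.sum_mulShift _ (ZMod.isPrimitive_stdAddChar d), ZMod.natCast_eq_zero_iff, ZMod.card,
    apply_ite (Nat.cast : ℕ → ℂ), Nat.cast_zero]

theorem sum_range_exp_mul_of_periodic {d n N : ℕ} (hd : d ≠ 0) (hn : n ≠ 0) (h : d * n = N)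
    (m : ℕ) {g : ℕ → ℂ} (hg : Function.Periodic g n) :
    ∑ j ∈ range N, exp (2 * π * I * m * j / N) * g j =
      (∑ q ∈ range d, exp (2 * π * I * m * q / d)) *
        ∑ r ∈ range n, exp (2 * π * I * m * r / N) * g r := by
  subst h
  rw [sum_range_mul_eq_sum_sum, sum_mul]
  refine sum_congr rfl fun q _ => ?_
  rw [mul_sum]
  refine sum_congr rfl fun r _ => ?_
  have hsplit : 2 * π * I * m * ((q * n + r : ℕ) : ℂ) / (d * n : ℕ) =
      2 * π * I * m * q / d + 2 * π * I * m * r / (d * n : ℕ) := by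
    push_cast
    field_simp
  have hperiod : g (q * n + r) = g r := by simpa [add_comm] using hg.nat_mul q r
  rw [hsplit, exp_add, hperiod, mul_assoc]

theorem sum_range_exp_mul_eq_xhat {N d : ℕ} [NeZero (N / d)] (hd : d ∣ N) (x : ZMod N → ℂ)
    {m k u v : ℕ} (hm : m = d * u) (hk : k = d * v) (hv : v.Coprime (N / d))
    {t : ZMod (N / d)} (ht : (v : ZMod (N / d)) * t = u) :
    ∑ r ∈ range (N / d), exp (2 * π * I * m * r / N) * x ((r * k : ℕ) : ZMod N) =
      xhat N d x t := by
  have hdn : d * (N / d) = N := Nat.mul_div_cancel' hd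
  have hd0 : (d : ℂ) ≠ 0 :=
    Nat.cast_ne_zero.2 fun h => NeZero.ne (N / d) (by rw [h, Nat.div_zero])
  obtain ⟨w, hw⟩ := (ZMod.isUnit_iff_coprime v (N / d)).2 hv
  rw [xhat, eq_comm, ZMod.sum_range_eq_sum_val, ZMod.sum_range_eq_sum_val,
    ← Equiv.sum_comp (Units.mulLeft w)]
  refine Fintype.sum_congr _ _ fun z => ?_
  simp only [Units.mulLeft_apply, hw]
  have hexp : exp (2 * π * I * t.val * (v * z).val / (N / d : ℕ)) =
      exp (2 * π * I * m * z.val / N) := by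
    have hNC : (N : ℂ) = d * (N / d : ℕ) := by exact_mod_cast hdn.symm
    rw [show 2 * π * I * m * z.val / N = 2 * π * I * u * z.val / (N / d : ℕ) by
      rw [hm, hNC]; push_cast; field_simp]
    rw [exp_two_pi_I_mul_mul_div_eq_stdAddChar, exp_two_pi_I_mul_mul_div_eq_stdAddChar]
    simp only [ZMod.natCast_val, ZMod.cast_id', id, ← ht]
    ring_nf
  have hx : ((d * (v * z).val : ℕ) : ZMod N) = ((z.val * k : ℕ) : ZMod N) := by
    rw [hk, show z.val * (d * v) = d * (v * z.val) by ring]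
    exact ZMod.natCast_mul_eq_of_natCast_eq hdn (by simp)
  rw [hexp, hx, mul_comm]

theorem fourierMatrix_mul_XMat_apply_eq_sum (N : ℕ) (x : ZMod N → ℂ) (m k : Fin N) :
    (fourierMatrix N * XMat N x) m k =
      ∑ j ∈ range N, exp (2 * π * I * (m : ℕ) * j / N) * x ((j * k : ℕ) : ZMod N) := by
  rw [Matrix.mul_apply, ← Fin.sum_univ_eq_sum_range]
  simp only [fourierMatrix, XMat, Matrix.of_apply, Nat.cast_mul]

theorem fourierMatrix_mul_XMat_apply_general (N : ℕ) (x : ZMod N → ℂ)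
    (m k : Fin N) :
    (¬ (Nat.gcd (k : ℕ) N ∣ (m : ℕ)) → (fourierMatrix N * XMat N x) m k = 0) ∧
    (∀ u v : ℕ, (m : ℕ) = Nat.gcd (k : ℕ) N * u → (k : ℕ) = Nat.gcd (k : ℕ) N * v →
      ∀ t : ZMod (N / Nat.gcd (k : ℕ) N),
        (v : ZMod (N / Nat.gcd (k : ℕ) N)) * t = (u : ZMod (N / Nat.gcd (k : ℕ) N)) →
        (fourierMatrix N * XMat N x) m k =
          (Nat.gcd (k : ℕ) N : ℂ) * xhat N (Nat.gcd (k : ℕ) N) x t) := by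
  set d := Nat.gcd (k : ℕ) N
  have hN : 0 < N := m.pos
  have hd : 0 < d := Nat.gcd_pos_of_pos_right _ hN
  have hdN : d ∣ N := Nat.gcd_dvd_right _ _
  have hdn : d * (N / d) = N := Nat.mul_div_cancel' hdN
  have : NeZero d := ⟨hd.ne'⟩
  have : NeZero (N / d) := ⟨(Nat.div_ne_zero_iff_of_dvd hdN).2 ⟨hN.ne', hd.ne'⟩⟩
  have hperiodic : Function.Periodic (fun j : ℕ => x ((j * k : ℕ) : ZMod N)) (N / d) := by
    obtain ⟨c, hc⟩ : d ∣ k := Nat.gcd_dvd_left k N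
    have hNk : ((N / d * k : ℕ) : ZMod N) = 0 :=
      (ZMod.natCast_eq_zero_iff _ _).2 ⟨c, by rw [hc, ← mul_assoc, mul_comm (N / d), hdn]⟩
    intro j
    simp only [add_mul, Nat.cast_add, hNk, add_zero]
  rw [fourierMatrix_mul_XMat_apply_eq_sum,
    sum_range_exp_mul_of_periodic hd.ne' (NeZero.ne _) hdn _ hperiodic,
    sum_range_exp_two_pi_I_mul_div]
  refine ⟨fun h => by rw [if_neg h, zero_mul], fun u v hm hk t ht => ?_⟩
  have hv : v.Coprime (N / d) := by
    have h : (k / d : ℕ).Coprime (N / d) := Nat.coprime_div_gcd_div_gcd hd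
    rwa [hk, Nat.mul_div_cancel_left v hd] at h
  rw [if_pos ⟨u, hm⟩, sum_range_exp_mul_eq_xhat hdN x hm hk hv ht]

/-- Entry structure of `F_N·X_N`: with `d = gcd(k,N)`, the `(m,k)` entry vanishes
unless `d ∣ m`, and if `m = du`, `k = dv` then it equals `d·x̂_d(t)` where `t` is the
unique residue mod `N_d = N/d` with `v·t ≡ u (mod N_d)`. -/
theorem fourierMatrix_mul_XMat_apply (N : ℕ) (hN : 2 ≤ N) (x : ZMod N → ℂ)
    (m k : Fin N) :
    (¬ (Nat.gcd (k : ℕ) N ∣ (m : ℕ)) → (fourierMatrix N * XMat N x) m k = 0) ∧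
    (∀ u v : ℕ, (m : ℕ) = Nat.gcd (k : ℕ) N * u → (k : ℕ) = Nat.gcd (k : ℕ) N * v →
      ∀ t : ZMod (N / Nat.gcd (k : ℕ) N),
        (v : ZMod (N / Nat.gcd (k : ℕ) N)) * t = (u : ZMod (N / Nat.gcd (k : ℕ) N)) →
        (fourierMatrix N * XMat N x) m k =
          (Nat.gcd (k : ℕ) N : ℂ) * xhat N (Nat.gcd (k : ℕ) N) x t) :=
  fourierMatrix_mul_XMat_apply_general N x m k
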